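/- Let N be an odd perfect number (i.e., N is odd and σ(N) = 2N). Then there exist a prime p, non-negative integers n and λ, and an odd positive integer Q with p ∤ Q such that one of the following holds: (i) p = 12n+1 and N = p^{12λ+1} Q²; (ii) p = 12n+1 and N = p^{12λ+9} Q²; (iii) p = 12n+5 and N = p^{12λ+1} (3Q)²; (iv) p = 12n+5 and N = p^{12λ+9} (3Q)²; (v) p = 12n+1, N = p^{12λ+5} (3Q)², and n ≡ 0 or 1 (mod 7); (vi) p = 12n+5, N = p^{12λ+5} (3Q)², and n ≡ 2 or 3 (mod 7); (vii) p = 12n+1, N = p^{12λ+5} (21Q)², and n ≡ 2, 3, 5, or 6 (mod 7); (viii) p = 12n+5, N = p^{12λ+5} (21Q)², and n ≡ 0, 1, 4, or 5 (mod 7). -/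

import Mathlib

/-!
Write `N = p ^ a * m'` with `p ∤ m'`. As `σ` is multiplicative,
`σ(p ^ a) σ(m') = 2N ≡ 2 (mod 4)`.
Choosing `p` with `a` odd makes `σ(p ^ a)` even, hence `≡ 2 (mod 4)`, which forces
`p ≡ a ≡ 1 (mod 4)`, and makes `σ(m')` odd, which forces `m' = m ^ 2` (Euler). Every odd prime
dividing `σ(p ^ a)` then divides `m`. If `p ≡ 2 (mod 3)`, or `a ≡ 5 (mod 12)` so that
`6 ∣ a + 1`, then `3 ∣ σ(p ^ a)`; if moreover `p ≢ 0, 1 (mod 7)`, Fermat's little theorem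
gives `7 ∣ σ(p ^ a)`. The eight shapes are these cases, read off `p`, `a` mod 12 and `p` mod 7.
-/

open Finset ArithmeticFunction
open scoped ArithmeticFunction.sigma

namespace Nat

variable {p q k n : ℕ}

theorem geom_sum_modEq_of_modEq_one (h : p ≡ 1 [MOD k]) (n : ℕ) :
    ∑ i ∈ range n, p ^ i ≡ n [MOD k] := by
  simpa using ModEq.sum (s := range n) fun i _ => h.pow i

theorem odd_geom_sum_iff (hp : Odd p) : Odd (∑ i ∈ range n, p ^ i) ↔ Odd n := by
  have h := geom_sum_modEq_of_modEq_one (k := 2) (odd_iff.1 hp) n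
  rw [odd_iff, odd_iff, h]

theorem dvd_geom_sum_of_dvd_add_one (h : k ∣ p + 1) (hn : Even n) :
    k ∣ ∑ i ∈ range n, p ^ i := by
  have hp : (p : ZMod k) = -1 :=
    eq_neg_of_add_eq_zero_left (by exact_mod_cast (ZMod.natCast_eq_zero_iff _ _).2 h)
  rw [← ZMod.natCast_eq_zero_iff]
  simp [hp, neg_one_geom_sum, hn]

theorem Prime.dvd_geom_sum_of_sub_one_dvd (hq : q.Prime) (hp : ¬q ∣ p) (hp1 : ¬p ≡ 1 [MOD q])
    (hn : q - 1 ∣ n) : q ∣ ∑ i ∈ range n, p ^ i := by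
  have := Fact.mk hq
  have h0 : (p : ZMod q) ≠ 0 := by rwa [Ne, ZMod.natCast_eq_zero_iff]
  have h1 : (p : ZMod q) ≠ 1 := by rwa [Ne, ← cast_one, ZMod.natCast_eq_natCast_iff]
  obtain ⟨c, rfl⟩ := hn
  rw [← ZMod.natCast_eq_zero_iff]
  push_cast
  rw [geom_sum_eq h1, pow_mul, ZMod.pow_card_sub_one_eq_one h0, one_pow, sub_self, zero_div]

theorem Prime.dvd_geom_sum_of_mul_sub_one_dvd (hq : q.Prime) (hp : ¬q ∣ p)
    (hn : q * (q - 1) ∣ n) : q ∣ ∑ i ∈ range n, p ^ i := by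
  by_cases hp1 : p ≡ 1 [MOD q]
  · exact (modEq_zero_iff_dvd.1 <|
      (geom_sum_modEq_of_modEq_one hp1 n).trans (modEq_zero_iff_dvd.2 (dvd_of_mul_right_dvd hn)))
  · exact hq.dvd_geom_sum_of_sub_one_dvd hp hp1 (dvd_of_mul_left_dvd hn)

theorem coprime_geom_sum_self (p n : ℕ) : Coprime (∑ i ∈ range (n + 1), p ^ i) p := by
  rw [sum_range_succ', pow_zero]
  simp only [pow_succ, ← sum_mul, coprime_mul_right_add_left]
  exact coprime_one_left p

theorem Prime.dvd_of_dvd_two_mul_sq {m : ℕ} (hq : q.Prime) (hq2 : q ≠ 2) (h : q ∣ 2 * m ^ 2) :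
    q ∣ m := by
  have h2 : Coprime q 2 := (coprime_primes hq prime_two).2 hq2
  exact hq.dvd_of_dvd_pow (h2.dvd_of_dvd_mul_left h)

theorem odd_sigma_one_iff {m : ℕ} (hm : Odd m) :
    Odd (σ 1 m) ↔ ∀ q ∈ m.primeFactors, Even (m.factorization q) := by
  rw [sigma_one_apply, sum_divisors hm.pos.ne', ← not_even_iff_odd, even_iff_two_dvd,
    prime_two.prime.dvd_finsetProd_iff]
  simp only [not_exists, not_and]
  refine forall₂_congr fun q hq => ?_
  have hq : Odd q := hm.of_dvd_nat (dvd_of_mem_primeFactors hq)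
  rw [← even_iff_two_dvd, not_even_iff_odd, odd_geom_sum_iff hq, odd_add_one, not_odd_iff_even]

theorem exists_eq_sq_of_even_factorization {m : ℕ} (hm : m ≠ 0)
    (h : ∀ q ∈ m.primeFactors, Even (m.factorization q)) : ∃ s, m = s ^ 2 := by
  refine ⟨∏ q ∈ m.primeFactors, q ^ (m.factorization q / 2), ?_⟩
  rw [← prod_pow]
  conv_lhs => rw [← prod_factorization_pow_eq_self hm]
  refine prod_congr m.support_factorization fun q hq => ?_
  rw [← pow_mul]
  obtain ⟨c, hc⟩ := h q hq
  congr 1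
  omega

theorem mod_four_eq_one_of_geom_sum_mod_four_eq_two {a : ℕ} (hp : Odd p)
    (h : (∑ i ∈ range (a + 1), p ^ i) % 4 = 2) : p % 4 = 1 ∧ a % 4 = 1 := by
  have ha : Even (a + 1) := by
    rw [← not_odd_iff_even, ← odd_geom_sum_iff hp, odd_iff]
    omega
  have hp4 : p % 4 = 1 := by
    by_contra hp4
    have : 4 ∣ ∑ i ∈ range (a + 1), p ^ i :=
      dvd_geom_sum_of_dvd_add_one (by have := odd_iff.1 hp; omega) ha
    omega
  have := geom_sum_modEq_of_modEq_one (k := 4) hp4 (a + 1)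
  unfold ModEq at this
  omega

theorem Perfect.exists_euler_form {N : ℕ} (hN : N.Perfect) (hodd : Odd N) :
    ∃ p a m, p.Prime ∧ p % 4 = 1 ∧ a % 4 = 1 ∧ ¬p ∣ m ∧ N = p ^ a * m ^ 2 ∧
      (∑ i ∈ range (a + 1), p ^ i) ∣ 2 * m ^ 2 := by
  have hσ : σ 1 N = 2 * N := by
    rw [sigma_one_apply]
    exact (perfect_iff_sum_divisors_eq_two_mul hN.2).1 hN
  obtain ⟨p, hpN, hpexp⟩ : ∃ p ∈ N.primeFactors, Odd (N.factorization p) := by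
    by_contra! h
    have hσodd := (odd_sigma_one_iff hodd).2 fun q hq => not_odd_iff_even.1 (h q hq)
    rw [hσ] at hσodd
    exact not_odd_iff_even.2 (even_two_mul N) hσodd
  have hp := prime_of_mem_primeFactors hpN
  have hpodd : Odd p := hodd.of_dvd_nat (dvd_of_mem_primeFactors hpN)
  obtain ⟨a, m', ha, rfl, hpm'⟩ : ∃ a m', Odd a ∧ N = p ^ a * m' ∧ ¬p ∣ m' :=
    ⟨_, _, hpexp, (ordProj_mul_ordCompl_eq_self N p).symm, not_dvd_ordCompl hp hodd.pos.ne'⟩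
  have hm'odd : Odd m' := Nat.Odd.of_mul_right hodd
  have hST : (∑ i ∈ range (a + 1), p ^ i) * σ 1 m' = 2 * (p ^ a * m') := by
    rw [← sigma_one_apply_prime_pow hp, ← hσ,
      isMultiplicative_sigma.map_mul_of_coprime ((hp.coprime_iff_not_dvd.2 hpm').pow_left a)]
  obtain ⟨k, hk⟩ : Even (∑ i ∈ range (a + 1), p ^ i) := by
    rw [← not_odd_iff_even, odd_geom_sum_iff hpodd, odd_add_one, not_not]
    exact ha
  have hkT : k * σ 1 m' = p ^ a * m' := by
    have : 2 * (k * σ 1 m') = 2 * (p ^ a * m') := by rw [← hST, hk]; ring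
    omega
  obtain ⟨hkodd, hT⟩ := odd_mul.1 (hkT ▸ hodd)
  have hS4 : (∑ i ∈ range (a + 1), p ^ i) % 4 = 2 := by
    have := odd_iff.1 hkodd
    omega
  obtain ⟨m, rfl⟩ :=
    exists_eq_sq_of_even_factorization hm'odd.pos.ne' ((odd_sigma_one_iff hm'odd).1 hT)
  obtain ⟨hp4, ha4⟩ := mod_four_eq_one_of_geom_sum_mod_four_eq_two hpodd hS4
  refine ⟨p, a, m, hp, hp4, ha4, fun h => hpm' (dvd_pow h two_ne_zero), rfl, ?_⟩
  refine ((coprime_geom_sum_self p a).pow_right a).dvd_of_dvd_mul_right ⟨σ 1 (m ^ 2), ?_⟩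
  rw [hST]
  ring

theorem exists_eq_mul_odd_not_dvd {c m : ℕ} (hc : c ∣ m) (hm : Odd m) (hpm : ¬p ∣ m) :
    ∃ Q, m = c * Q ∧ Odd Q ∧ ¬p ∣ Q := by
  obtain ⟨Q, rfl⟩ := hc
  exact ⟨Q, rfl, Nat.Odd.of_mul_right hm, fun h => hpm (h.mul_left c)⟩

section EulerForm

variable {a m : ℕ} (hσ : ∑ i ∈ range (a + 1), p ^ i ∣ 2 * m ^ 2)
include hσ

theorem three_dvd_of_geom_sum_dvd (hp : ¬3 ∣ p) (h : p % 3 = 2 ∧ a % 2 = 1 ∨ a % 12 = 5) :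
    3 ∣ m := by
  refine prime_three.dvd_of_dvd_two_mul_sq (by norm_num) (dvd_trans ?_ hσ)
  rcases h with ⟨hp3, ha⟩ | ha
  · exact dvd_geom_sum_of_dvd_add_one (by omega) (even_iff_two_dvd.2 (by omega))
  · exact prime_three.dvd_geom_sum_of_mul_sub_one_dvd hp (by omega)

theorem twenty_one_dvd_of_geom_sum_dvd (hp3 : ¬3 ∣ p) (hp7 : ¬7 ∣ p) (hp1 : p % 7 ≠ 1)
    (ha : a % 12 = 5) : 21 ∣ m := by
  refine Coprime.mul_dvd_of_dvd_of_dvd (by norm_num : Coprime 3 7)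
    (three_dvd_of_geom_sum_dvd hσ hp3 (.inr ha)) ?_
  refine prime_seven.dvd_of_dvd_two_mul_sq (by norm_num) (dvd_trans ?_ hσ)
  exact prime_seven.dvd_geom_sum_of_sub_one_dvd hp7 (by unfold ModEq; omega) (by omega)

end EulerForm

end Nat

theorem fine_tuned_euler_form (N : ℕ) (hodd : Odd N)
    (hperf : ∑ d ∈ N.divisors, d = 2 * N) :
    ∃ (p n lam Q : ℕ), p.Prime ∧ 0 < Q ∧ Odd Q ∧ ¬ p ∣ Q ∧
      ((p = 12 * n + 1 ∧ N = p ^ (12 * lam + 1) * Q ^ 2) ∨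
       (p = 12 * n + 1 ∧ N = p ^ (12 * lam + 9) * Q ^ 2) ∨
       (p = 12 * n + 5 ∧ N = p ^ (12 * lam + 1) * (3 * Q) ^ 2) ∨
       (p = 12 * n + 5 ∧ N = p ^ (12 * lam + 9) * (3 * Q) ^ 2) ∨
       (p = 12 * n + 1 ∧ N = p ^ (12 * lam + 5) * (3 * Q) ^ 2 ∧
         (n % 7 = 0 ∨ n % 7 = 1)) ∨
       (p = 12 * n + 5 ∧ N = p ^ (12 * lam + 5) * (3 * Q) ^ 2 ∧
         (n % 7 = 2 ∨ n % 7 = 3)) ∨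
       (p = 12 * n + 1 ∧ N = p ^ (12 * lam + 5) * (21 * Q) ^ 2 ∧
         (n % 7 = 2 ∨ n % 7 = 3 ∨ n % 7 = 5 ∨ n % 7 = 6)) ∨
       (p = 12 * n + 5 ∧ N = p ^ (12 * lam + 5) * (21 * Q) ^ 2 ∧
         (n % 7 = 0 ∨ n % 7 = 1 ∨ n % 7 = 4 ∨ n % 7 = 5))) := by
  obtain ⟨p, a, m, hp, hp4, ha4, hpm, rfl, hσ⟩ :=
    ((Nat.perfect_iff_sum_divisors_eq_two_mul hodd.pos).2 hperf).exists_euler_form hodd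
  have hm : Odd m := (Nat.odd_pow_iff two_ne_zero).1 (Nat.Odd.of_mul_right hodd)
  have not_dvd_p : ∀ q, q % 4 = 3 → ¬q ∣ p := fun q hq h => by
    rcases hp.eq_one_or_self_of_dvd q h with h | h <;> omega
  have h3 := Nat.three_dvd_of_geom_sum_dvd hσ (not_dvd_p 3 rfl)
  have quotient := fun {c} (hc : c ∣ m) => Nat.exists_eq_mul_odd_not_dvd hc hm hpm
  obtain ⟨n, hpn⟩ : ∃ n, p = 12 * n + 1 ∨ p = 12 * n + 5 :=
    ⟨p / 12, by have := not_dvd_p 3 rfl; omega⟩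
  obtain ⟨lam, hlam⟩ : ∃ lam, a = 12 * lam + 1 ∨ a = 12 * lam + 5 ∨ a = 12 * lam + 9 :=
    ⟨a / 12, by omega⟩
  rcases hlam with rfl | rfl | rfl
  · rcases hpn with rfl | rfl
    · exact ⟨_, n, lam, m, hp, hm.pos, hm, hpm, .inl ⟨rfl, rfl⟩⟩
    · obtain ⟨Q, rfl, hQ, hpQ⟩ := quotient (h3 (.inl (by omega)))
      exact ⟨_, n, lam, Q, hp, hQ.pos, hQ, hpQ, .inr <| .inr <| .inl ⟨rfl, rfl⟩⟩
  · -- `12 n + 1` (resp. `12 n + 5`) is `≡ ±1 (mod 7)` iff `n ≡ 0, 1` (resp. `2, 3`) mod 7.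
    by_cases hp7 : p % 7 = 1 ∨ p % 7 = 6
    · obtain ⟨Q, rfl, hQ, hpQ⟩ := quotient (h3 (.inr (by omega)))
      rcases hpn with rfl | rfl
      · exact ⟨_, n, lam, Q, hp, hQ.pos, hQ, hpQ,
          .inr <| .inr <| .inr <| .inr <| .inl ⟨rfl, rfl, by omega⟩⟩
      · exact ⟨_, n, lam, Q, hp, hQ.pos, hQ, hpQ,
          .inr <| .inr <| .inr <| .inr <| .inr <| .inl ⟨rfl, rfl, by omega⟩⟩
    · have hp7 : p % 7 = 2 ∨ p % 7 = 3 ∨ p % 7 = 4 ∨ p % 7 = 5 := by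
        have := not_dvd_p 7 rfl; omega
      obtain ⟨Q, rfl, hQ, hpQ⟩ := quotient <| Nat.twenty_one_dvd_of_geom_sum_dvd hσ
        (not_dvd_p 3 rfl) (not_dvd_p 7 rfl) (by omega) (by omega)
      rcases hpn with rfl | rfl
      · exact ⟨_, n, lam, Q, hp, hQ.pos, hQ, hpQ,
          .inr <| .inr <| .inr <| .inr <| .inr <| .inr <| .inl ⟨rfl, rfl, by omega⟩⟩
      · exact ⟨_, n, lam, Q, hp, hQ.pos, hQ, hpQ,
          .inr <| .inr <| .inr <| .inr <| .inr <| .inr <| .inr ⟨rfl, rfl, by omega⟩⟩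
  · rcases hpn with rfl | rfl
    · exact ⟨_, n, lam, m, hp, hm.pos, hm, hpm, .inr <| .inl ⟨rfl, rfl⟩⟩
    · obtain ⟨Q, rfl, hQ, hpQ⟩ := quotient (h3 (.inl (by omega)))
      exact ⟨_, n, lam, Q, hp, hQ.pos, hQ, hpQ, .inr <| .inr <| .inr <| .inl ⟨rfl, rfl⟩⟩
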